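/- Let X be a normed space over ℂ, let u ∈ X with ‖u‖ = 1, let k ≥ 1, and let x_{ij} ∈ X for 1 ≤ i, j ≤ k. Suppose that sup{‖(f(x_{ij}))_{i,j}‖ : f ∈ X*, ‖f‖ ≤ 1} = 1, where (f(x_{ij}))_{i,j} ∈ M_k(ℂ) carries the operator norm on Euclidean ℂ^k. Then n(X;u) ≤ sup{‖(f(x_{ij}))_{i,j}‖ : f ∈ S(X;u)}. -/

import Mathlib

/-- `S(X;u)`: the set of norm-one continuous linear functionals attaining value `1` at `u`. -/
def geomStates {X : Type*} [NormedAddCommGroup X] [NormedSpace ℂ X] (u : X) :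
    Set (X →L[ℂ] ℂ) :=
  {f | ‖f‖ = 1 ∧ f u = 1}

/-- `γ^u(x) = sup {|f(x)| : f ∈ S(X;u)}`. -/
noncomputable def geomGamma {X : Type*} [NormedAddCommGroup X] [NormedSpace ℂ X]
    (u x : X) : ℝ :=
  sSup {r : ℝ | ∃ f ∈ geomStates u, r = ‖f x‖}

/-- `n(X;u) = inf {γ^u(x) : ‖x‖ = 1}`. -/
noncomputable def geomN {X : Type*} [NormedAddCommGroup X] [NormedSpace ℂ X] (u : X) : ℝ :=
  sInf {r : ℝ | ∃ x : X, ‖x‖ = 1 ∧ r = geomGamma u x}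

/-- The operator norm of a complex matrix, as a linear map on Euclidean space. -/
noncomputable def matOpNorm {m n : Type*} [Fintype m] [Fintype n] [DecidableEq n]
    (M : Matrix m n ℂ) : ℝ :=
  ‖LinearMap.toContinuousLinearMap (Matrix.toEuclideanLin M)‖

/-!
For unit vectors `a, b ∈ ℂᵏ` put `y = ∑ᵢⱼ conj aᵢ bⱼ xᵢⱼ ∈ X`; then `f y = ⟪a, [f xᵢⱼ] b⟫` for every
functional `f`. Hence `γᵘ(y) ≤ sup {‖[f xᵢⱼ]‖ : f ∈ S(X;u)}`, while by homogeneity of `γᵘ`,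
`n(X;u) ‖y‖ ≤ γᵘ(y)`. Since `|⟪a, [f xᵢⱼ] b⟫| = |f y| ≤ ‖y‖` for `‖f‖ ≤ 1`, taking the supremum
over `a`, `b` and `f` bounds `n(X;u)` times the minimal norm of `[xᵢⱼ]`, which is `1`.
-/

open scoped ComplexConjugate InnerProductSpace Pointwise

section NumericalIndex

variable {X : Type*} [NormedAddCommGroup X] [NormedSpace ℂ X]

theorem geomGamma_nonneg (u x : X) : 0 ≤ geomGamma u x :=
  Real.sSup_nonneg <| by rintro _ ⟨f, -, rfl⟩; exact norm_nonneg _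

theorem geomGamma_smul (u x : X) (c : ℂ) : geomGamma u (c • x) = ‖c‖ * geomGamma u x := by
  have hset : {r : ℝ | ∃ f ∈ geomStates u, r = ‖f (c • x)‖} =
      ‖c‖ • {r : ℝ | ∃ f ∈ geomStates u, r = ‖f x‖} := by
    ext r
    simp only [Set.mem_smul_set, Set.mem_ofPred_eq, map_smul, smul_eq_mul, norm_mul]
    constructor
    · rintro ⟨f, hf, rfl⟩; exact ⟨_, ⟨f, hf, rfl⟩, rfl⟩
    · rintro ⟨_, ⟨f, hf, rfl⟩, rfl⟩; exact ⟨f, hf, rfl⟩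
  rw [geomGamma, hset, Real.sSup_smul_of_nonneg (norm_nonneg c), smul_eq_mul, geomGamma]

theorem geomN_nonneg (u : X) : 0 ≤ geomN u :=
  Real.sInf_nonneg <| by rintro _ ⟨x, -, rfl⟩; exact geomGamma_nonneg u x

theorem geomN_le_geomGamma (u : X) {x : X} (hx : ‖x‖ = 1) : geomN u ≤ geomGamma u x :=
  csInf_le ⟨0, by rintro _ ⟨x, -, rfl⟩; exact geomGamma_nonneg u x⟩ ⟨x, hx, rfl⟩

theorem geomN_mul_norm_le_geomGamma (u y : X) : geomN u * ‖y‖ ≤ geomGamma u y := by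
  rcases eq_or_ne y 0 with rfl | hy
  · simpa using geomGamma_nonneg u 0
  have hy' : ‖y‖ ≠ 0 := norm_ne_zero_iff.mpr hy
  have hunit : ‖((‖y‖⁻¹ : ℝ) : ℂ) • y‖ = 1 := by
    rw [norm_smul, Complex.norm_real, norm_inv, norm_norm, inv_mul_cancel₀ hy']
  have hy_eq : y = ((‖y‖ : ℝ) : ℂ) • ((‖y‖⁻¹ : ℝ) : ℂ) • y := by
    rw [smul_smul, ← Complex.ofReal_mul, mul_inv_cancel₀ hy', Complex.ofReal_one, one_smul]
  rw [hy_eq, geomGamma_smul, Complex.norm_real, norm_norm, ← hy_eq, mul_comm]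
  exact mul_le_mul_of_nonneg_left (geomN_le_geomGamma u hunit) (norm_nonneg y)

end NumericalIndex

section MatrixOfFunctionals

variable {X : Type*} [NormedAddCommGroup X] [NormedSpace ℂ X]
  {m n : Type*} [Fintype m] [Fintype n] [DecidableEq n]

def sesqSum (x : m → n → X) (a : EuclideanSpace ℂ m) (b : EuclideanSpace ℂ n) : X :=
  ∑ i, ∑ j, (conj (a i) * b j) • x i j

theorem inner_toEuclideanLin_map_apply (x : m → n → X) (g : X →L[ℂ] ℂ)
    (a : EuclideanSpace ℂ m) (b : EuclideanSpace ℂ n) :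
    ⟪a, Matrix.toEuclideanLin (Matrix.of fun i j => g (x i j)) b⟫_ℂ = g (sesqSum x a b) := by
  simp only [sesqSum, map_sum, map_smul, smul_eq_mul, Matrix.toLpLin_apply,
    PiLp.inner_apply, RCLike.inner_apply, Matrix.mulVec, dotProduct, Matrix.of_apply,
    Finset.sum_mul]
  exact Finset.sum_congr rfl fun i _ => Finset.sum_congr rfl fun j _ => by ring

theorem norm_apply_sesqSum_le_matOpNorm (x : m → n → X) (g : X →L[ℂ] ℂ)
    {a : EuclideanSpace ℂ m} {b : EuclideanSpace ℂ n} (ha : ‖a‖ ≤ 1) (hb : ‖b‖ ≤ 1) :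
    ‖g (sesqSum x a b)‖ ≤ matOpNorm (Matrix.of fun i j => g (x i j)) := by
  set T := LinearMap.toContinuousLinearMap (Matrix.toEuclideanLin (Matrix.of fun i j => g (x i j)))
  rw [← inner_toEuclideanLin_map_apply]
  calc ‖⟪a, T b⟫_ℂ‖ ≤ ‖a‖ * (‖T‖ * ‖b‖) :=
        (norm_inner_le_norm a _).trans
          (mul_le_mul_of_nonneg_left (T.le_opNorm b) (norm_nonneg a))
    _ ≤ 1 * (‖T‖ * 1) := by gcongr
    _ = matOpNorm (Matrix.of fun i j => g (x i j)) := by rw [one_mul, mul_one]; rfl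

theorem geomGamma_sesqSum_le (u : X) (x : m → n → X) {C : ℝ} (hC₀ : 0 ≤ C)
    (hC : ∀ g ∈ geomStates u, matOpNorm (Matrix.of fun i j => g (x i j)) ≤ C)
    {a : EuclideanSpace ℂ m} {b : EuclideanSpace ℂ n} (ha : ‖a‖ ≤ 1) (hb : ‖b‖ ≤ 1) :
    geomGamma u (sesqSum x a b) ≤ C :=
  Real.sSup_le (by
    rintro _ ⟨g, hg, rfl⟩
    exact (norm_apply_sesqSum_le_matOpNorm x g ha hb).trans (hC g hg)) hC₀

theorem geomN_mul_matOpNorm_le (u : X) (x : m → n → X) {C : ℝ} (hC₀ : 0 ≤ C)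
    (hC : ∀ g ∈ geomStates u, matOpNorm (Matrix.of fun i j => g (x i j)) ≤ C)
    {f : X →L[ℂ] ℂ} (hf : ‖f‖ ≤ 1) :
    geomN u * matOpNorm (Matrix.of fun i j => f (x i j)) ≤ C := by
  set T := LinearMap.toContinuousLinearMap (Matrix.toEuclideanLin (Matrix.of fun i j => f (x i j)))
  have hN := geomN_nonneg u
  suffices h : ‖(geomN u : ℂ) • T‖ ≤ C by
    rwa [norm_smul, Complex.norm_real, Real.norm_of_nonneg hN] at h
  refine ContinuousLinearMap.opNorm_le_of_re_inner_le hC₀ fun b a hb ha => ?_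
  have hy : ‖f (sesqSum x a b)‖ ≤ ‖sesqSum x a b‖ :=
    (f.le_opNorm _).trans (mul_le_of_le_one_left (norm_nonneg _) hf)
  calc RCLike.re ⟪((geomN u : ℂ) • T) b, a⟫_ℂ
      ≤ ‖⟪((geomN u : ℂ) • T) b, a⟫_ℂ‖ := RCLike.re_le_norm _
    _ = geomN u * ‖f (sesqSum x a b)‖ := by
        rw [smul_apply, inner_smul_left, norm_mul, RCLike.norm_conj,
          Complex.norm_real, Real.norm_of_nonneg hN, norm_inner_symm,
          ← inner_toEuclideanLin_map_apply]
        rfl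
    _ ≤ geomN u * ‖sesqSum x a b‖ := mul_le_mul_of_nonneg_left hy hN
    _ ≤ geomGamma u (sesqSum x a b) := geomN_mul_norm_le_geomGamma u _
    _ ≤ C := geomGamma_sesqSum_le u x hC₀ hC ha.le hb.le

end MatrixOfFunctionals

theorem geomN_le_sSup_norm_matrix_states_general
    {X : Type*} [NormedAddCommGroup X] [NormedSpace ℂ X]
    (u : X) (k : ℕ) (x : Fin k → Fin k → X)
    (hx : sSup {r : ℝ | ∃ f : X →L[ℂ] ℂ, ‖f‖ ≤ 1 ∧
        r = matOpNorm (Matrix.of fun i j => f (x i j))} = 1) :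
    geomN u ≤
      sSup {r : ℝ | ∃ f ∈ geomStates u,
        r = matOpNorm (Matrix.of fun i j => f (x i j))} := by
  set S := sSup {r : ℝ | ∃ f ∈ geomStates u, r = matOpNorm (Matrix.of fun i j => f (x i j))}
  -- `sSup` of a set that is not bounded above is `0`, so `hx` forces boundedness.
  have hbdd : BddAbove {r : ℝ | ∃ f : X →L[ℂ] ℂ, ‖f‖ ≤ 1 ∧
      r = matOpNorm (Matrix.of fun i j => f (x i j))} := by
    by_contra h
    rw [Real.sSup_of_not_bddAbove h] at hx
    exact zero_ne_one hx
  have hS : ∀ g ∈ geomStates u, matOpNorm (Matrix.of fun i j => g (x i j)) ≤ S := fun g hg =>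
    le_csSup (hbdd.mono <| by rintro _ ⟨f, hf, rfl⟩; exact ⟨f, hf.1.le, rfl⟩) ⟨g, hg, rfl⟩
  have hS₀ : 0 ≤ S := Real.sSup_nonneg <| by rintro _ ⟨g, -, rfl⟩; exact norm_nonneg _
  calc geomN u = sSup (geomN u • {r : ℝ | ∃ f : X →L[ℂ] ℂ, ‖f‖ ≤ 1 ∧
        r = matOpNorm (Matrix.of fun i j => f (x i j))}) := by
        rw [Real.sSup_smul_of_nonneg (geomN_nonneg u), hx, smul_eq_mul, mul_one]
    _ ≤ S := Real.sSup_le (by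
        rintro _ ⟨_, ⟨f, hf, rfl⟩, rfl⟩
        exact geomN_mul_matOpNorm_le u x hS₀ hS hf) hS₀

theorem geomN_le_sSup_norm_matrix_states
    {X : Type*} [NormedAddCommGroup X] [NormedSpace ℂ X]
    (u : X) (hu : ‖u‖ = 1) (k : ℕ) (hk : 1 ≤ k) (x : Fin k → Fin k → X)
    (hx : sSup {r : ℝ | ∃ f : X →L[ℂ] ℂ, ‖f‖ ≤ 1 ∧
        r = matOpNorm (Matrix.of fun i j => f (x i j))} = 1) :
    geomN u ≤
      sSup {r : ℝ | ∃ f ∈ geomStates u,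
        r = matOpNorm (Matrix.of fun i j => f (x i j))} :=
  geomN_le_sSup_norm_matrix_states_general u k x hx
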